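/- arXiv:2412.09437 — 2 statements merged into one kernel-verified Lean document; each statement's English description precedes it below -/
import Mathlib

section
/- With a = -11/10, b = 3/10, k = 1, the desingularized reduced system has exactly six equilibria on the fold lines: the four corners (±1, ±1), together with (-1, x2*) and (x1*, -1), where x1* = x2* = -11/10 - artanh(1/3) ≈ -1.4466; in particular g1(-1, x2*) = 0 and g2(x1*, -1) = 0, and there are no zeros of g1 on x1 = +1 and no zeros of g2 on x2 = +1. -/
/-- The inverse hyperbolic tangent. -/
noncomputable def artanh (x : ℝ) : ℝ := (1/2) * Real.log ((1 + x) / (1 - x))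

/-- `g1(x1,x2) = a - x1 + b·tanh(k(a - x2))`. -/
noncomputable def g1 (a b k x1 x2 : ℝ) : ℝ := a - x1 + b * Real.tanh (k * (a - x2))

/-- `g2(x1,x2) = a - x2 + b·tanh(k(a - x1))`. -/
noncomputable def g2 (a b k x1 x2 : ℝ) : ℝ := a - x2 + b * Real.tanh (k * (a - x1))

lemma tanh_formula (y : ℝ) :
    Real.tanh y = (Real.exp (2*y) - 1) / (Real.exp (2*y) + 1) := by
  have h1 : Real.exp (2*y) = Real.exp y * Real.exp y := by
    rw [show (2:ℝ)*y = y + y by ring, Real.exp_add]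
  have h2 : Real.exp (-y) = 1 / Real.exp y := by rw [Real.exp_neg]; field_simp
  have hp : (0:ℝ) < Real.exp y := Real.exp_pos y
  rw [Real.tanh_eq_sinh_div_cosh, Real.sinh_eq, Real.cosh_eq, h1, h2]
  field_simp

lemma tanh_lt_one' (y : ℝ) : Real.tanh y < 1 := by
  rw [tanh_formula]
  have hp : (0:ℝ) < Real.exp (2*y) + 1 := by positivity
  rw [div_lt_one hp]; linarith

lemma tanh_eq_third_iff (y : ℝ) : Real.tanh y = 1/3 ↔ y = Real.log 2 / 2 := by
  rw [tanh_formula]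
  have hp : (0:ℝ) < Real.exp (2*y) + 1 := by positivity
  rw [div_eq_iff (ne_of_gt hp)]
  constructor
  · intro h
    have he : Real.exp (2*y) = 2 := by linarith
    have := Real.log_exp (2*y)
    rw [he] at this
    linarith
  · intro h
    have he : Real.exp (2*y) = 2 := by
      rw [h, show 2*(Real.log 2/2) = Real.log 2 by ring]
      exact Real.exp_log (by norm_num)
    rw [he]; norm_num

lemma artanh_third : artanh (1/3) = Real.log 2 / 2 := by
  unfold artanh
  norm_num
  ring

/-- With `a = -11/10`, `b = 3/10`, `k = 1`, the desingularized reduced system has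
exactly six equilibria on the fold lines: the four corners `(±1, ±1)` together with
`(-1, s)` and `(s, -1)` where `s = -11/10 - artanh(1/3)`; in particular
`g1(-1, s) = 0`, `g2(s, -1) = 0`, and `g1` has no zeros on `x1 = 1` and `g2`
has no zeros on `x2 = 1`. -/
theorem six_folded_singularities (a b k : ℝ)
    (ha : a = -11/10) (hb : b = 3/10) (hk : k = 1) :
    g1 a b k (-1) (-11/10 - artanh (1/3)) = 0 ∧
    g2 a b k (-11/10 - artanh (1/3)) (-1) = 0 ∧
    (∀ x2 : ℝ, g1 a b k 1 x2 ≠ 0) ∧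
    (∀ x1 : ℝ, g2 a b k x1 1 ≠ 0) ∧
    {p : ℝ × ℝ | (p.1 = 1 ∨ p.1 = -1 ∨ p.2 = 1 ∨ p.2 = -1) ∧
        (p.2^2 - 1) * g1 a b k p.1 p.2 = 0 ∧ (p.1^2 - 1) * g2 a b k p.1 p.2 = 0} =
      {((1 : ℝ), (1 : ℝ)), (1, -1), (-1, 1), (-1, -1),
       (-1, -11/10 - artanh (1/3)), (-11/10 - artanh (1/3), -1)} := by
  subst ha hb hk
  set s : ℝ := -11/10 - artanh (1/3) with hs
  have hsval : s = -11/10 - Real.log 2 / 2 := by rw [hs, artanh_third]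
  -- zero lemmas
  have hg1iff : ∀ x2 : ℝ, g1 (-11/10) (3/10) 1 (-1) x2 = 0 ↔ x2 = s := by
    intro x2
    unfold g1
    constructor
    · intro h
      have ht : Real.tanh (1 * (-11/10 - x2)) = 1/3 := by linarith
      have := (tanh_eq_third_iff _).mp ht
      rw [hsval]; linarith
    · intro h
      rw [h, hsval]
      have : (1 : ℝ) * (-11/10 - (-11/10 - Real.log 2 / 2)) = Real.log 2 / 2 := by ring
      rw [this, (tanh_eq_third_iff _).mpr rfl]
      norm_num
  have hg2iff : ∀ x1 : ℝ, g2 (-11/10) (3/10) 1 x1 (-1) = 0 ↔ x1 = s := by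
    intro x1
    unfold g2
    constructor
    · intro h
      have ht : Real.tanh (1 * (-11/10 - x1)) = 1/3 := by linarith
      have := (tanh_eq_third_iff _).mp ht
      rw [hsval]; linarith
    · intro h
      rw [h, hsval]
      have : (1 : ℝ) * (-11/10 - (-11/10 - Real.log 2 / 2)) = Real.log 2 / 2 := by ring
      rw [this, (tanh_eq_third_iff _).mpr rfl]
      norm_num
  have hg1neg : ∀ x2 : ℝ, g1 (-11/10) (3/10) 1 1 x2 < 0 := by
    intro x2
    unfold g1
    have := tanh_lt_one' (1 * (-11/10 - x2))
    nlinarith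
  have hg2neg : ∀ x1 : ℝ, g2 (-11/10) (3/10) 1 x1 1 < 0 := by
    intro x1
    unfold g2
    have := tanh_lt_one' (1 * (-11/10 - x1))
    nlinarith
  refine ⟨(hg1iff s).mpr rfl, (hg2iff s).mpr rfl,
    fun x2 => ne_of_lt (hg1neg x2), fun x1 => ne_of_lt (hg2neg x1), ?_⟩
  have sq1 : ∀ t : ℝ, t ^ 2 = 1 → t = 1 ∨ t = -1 := by
    intro t h
    have h' : (t - 1) * (t + 1) = 0 := by nlinarith
    rcases mul_eq_zero.mp h' with h'' | h''
    · left; linarith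
    · right; linarith
  ext ⟨x1, x2⟩
  simp only [Set.mem_setOf_eq, Set.mem_insert_iff, Set.mem_singleton_iff, Prod.mk.injEq]
  constructor
  · rintro ⟨hline, h1, h2⟩
    have key1 : x2 ^ 2 = 1 ∨ g1 (-11/10) (3/10) 1 x1 x2 = 0 := by
      rcases mul_eq_zero.mp h1 with h | h
      · left; linarith
      · right; exact h
    have key2 : x1 ^ 2 = 1 ∨ g2 (-11/10) (3/10) 1 x1 x2 = 0 := by
      rcases mul_eq_zero.mp h2 with h | h
      · left; linarith
      · right; exact h
    rcases hline with hl | hl | hl | hl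
    · -- x1 = 1
      subst hl
      rcases key1 with h | h
      · rcases sq1 _ h with h' | h'
        · exact Or.inl ⟨rfl, h'⟩
        · exact Or.inr (Or.inl ⟨rfl, h'⟩)
      · exact absurd h (ne_of_lt (hg1neg x2))
    · -- x1 = -1
      subst hl
      rcases key1 with h | h
      · rcases sq1 _ h with h' | h'
        · exact Or.inr (Or.inr (Or.inl ⟨rfl, h'⟩))
        · exact Or.inr (Or.inr (Or.inr (Or.inl ⟨rfl, h'⟩)))
      · exact Or.inr (Or.inr (Or.inr (Or.inr (Or.inl ⟨rfl, (hg1iff x2).mp h⟩))))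
    · -- x2 = 1
      subst hl
      rcases key2 with h | h
      · rcases sq1 _ h with h' | h'
        · exact Or.inl ⟨h', rfl⟩
        · exact Or.inr (Or.inr (Or.inl ⟨h', rfl⟩))
      · exact absurd h (ne_of_lt (hg2neg x1))
    · -- x2 = -1
      subst hl
      rcases key2 with h | h
      · rcases sq1 _ h with h' | h'
        · exact Or.inr (Or.inl ⟨h', rfl⟩)
        · exact Or.inr (Or.inr (Or.inr (Or.inl ⟨h', rfl⟩)))
      · exact Or.inr (Or.inr (Or.inr (Or.inr (Or.inr ⟨(hg2iff x1).mp h, rfl⟩))))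
  · rintro (⟨h1, h2⟩ | ⟨h1, h2⟩ | ⟨h1, h2⟩ | ⟨h1, h2⟩ | ⟨h1, h2⟩ | ⟨h1, h2⟩) <;>
      subst h1 <;> subst h2
    · exact ⟨Or.inl rfl, by norm_num, by norm_num⟩
    · exact ⟨Or.inl rfl, by norm_num, by norm_num⟩
    · exact ⟨Or.inr (Or.inl rfl), by norm_num, by norm_num⟩
    · exact ⟨Or.inr (Or.inl rfl), by norm_num, by norm_num⟩
    · exact ⟨Or.inr (Or.inl rfl), by rw [(hg1iff s).mpr rfl]; ring, by norm_num⟩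
    · exact ⟨Or.inr (Or.inr (Or.inr rfl)), by norm_num, by rw [(hg2iff s).mpr rfl]; ring⟩
end

section
/- The folded singularities (1, -1) and (-1, 1) of the desingularized reduced system are equilibria at which the Jacobian of ( (x2^2-1)g1, (x1^2-1)g2 ) has determinant 4·g1·g2 evaluated at the point; at (1,-1) with a = -11/10, b = 3/10, k = 1 this determinant is positive and the trace is 2(x2 g1 + x1 g2)|_{(1,-1)} = 2(-g1(1,-1) + g2(1,-1)), and trace^2 - 4·det < 0, so (1,-1) is a folded focus. -/
lemma tanh_eq' (x : ℝ) : Real.tanh x = (Real.exp x - Real.exp (-x)) / (Real.exp x + Real.exp (-x)) := by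
  have h : Real.exp x + Real.exp (-x) > 0 := by positivity
  rw [Real.tanh_eq_sinh_div_cosh, Real.sinh_eq, Real.cosh_eq]
  field_simp

lemma t1_bounds : -19/181 ≤ Real.tanh (-(1/10) : ℝ) ∧ Real.tanh (-(1/10) : ℝ) ≤ -21/221 := by
  have hs1 : Real.exp (1/10 : ℝ) ≥ 11/10 := by linarith [Real.add_one_le_exp (1/10 : ℝ)]
  have hs0 : (0:ℝ) < Real.exp (1/10) := Real.exp_pos _
  have hs2 : Real.exp (1/10 : ℝ) ≤ 10/9 := by
    have h1 : Real.exp (-(1/10) : ℝ) ≥ 9/10 := by linarith [Real.add_one_le_exp (-(1/10) : ℝ)]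
    have h2 : Real.exp (-(1/10) : ℝ) * Real.exp (1/10 : ℝ) = 1 := by
      rw [← Real.exp_add]; norm_num
    nlinarith
  set s := Real.exp (1/10 : ℝ) with hsdef
  have hinv : Real.exp (-(1/10) : ℝ) = s⁻¹ := Real.exp_neg _
  have key : Real.tanh (-(1/10) : ℝ) * (1 + s^2) = 1 - s^2 := by
    rw [tanh_eq', hinv, neg_neg, ← hsdef]
    field_simp
  constructor <;> nlinarith [sq_nonneg s]

lemma t2_bounds : -1 < Real.tanh (-(21/10) : ℝ) ∧ Real.tanh (-(21/10) : ℝ) ≤ -24/25 := by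
  have hs1 : Real.exp (21/10 : ℝ) ≥ 7 := by
    have h2 : Real.exp (2:ℝ) ≤ Real.exp (21/10 : ℝ) := Real.exp_le_exp.mpr (by norm_num)
    have h3 : Real.exp (2:ℝ) = Real.exp 1 * Real.exp 1 := by rw [← Real.exp_add]; norm_num
    nlinarith [Real.exp_one_gt_d9]
  have hs0 : (0:ℝ) < Real.exp (21/10) := Real.exp_pos _
  set s := Real.exp (21/10 : ℝ) with hsdef
  have hinv : Real.exp (-(21/10) : ℝ) = s⁻¹ := Real.exp_neg _
  have key : Real.tanh (-(21/10) : ℝ) * (1 + s^2) = 1 - s^2 := by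
    rw [tanh_eq', hinv, neg_neg, ← hsdef]
    field_simp
  constructor <;> nlinarith [sq_nonneg s]

/-- At the folded singularity `(1,-1)` with `a = -11/10`, `b = 3/10`, `k = 1`, the
Jacobian `[[0, 2x2·g1], [2x1·g2, 0]]` of the desingularized system
`(F1, F2) = ((x2²-1)g1, (x1²-1)g2)` has determinant `4·g1·g2 > 0`, and with
trace `T = 2(x2·g1 + x1·g2) = 2(-g1 + g2)` one has `T² - 4·det < 0`, so the roots of
`λ² - Tλ + det` are non-real: `(1,-1)` is a folded focus. -/
theorem folded_focus_at_one_neg_one (a b k : ℝ)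
    (ha : a = -11/10) (hb : b = 3/10) (hk : k = 1) :
    (Matrix.det (!![0, 2*(-1)*g1 a b k 1 (-1); 2*1*g2 a b k 1 (-1), 0] :
        Matrix (Fin 2) (Fin 2) ℝ) = 4 * g1 a b k 1 (-1) * g2 a b k 1 (-1)) ∧
    4 * g1 a b k 1 (-1) * g2 a b k 1 (-1) > 0 ∧
    (2*((-1)*g1 a b k 1 (-1) + 1*g2 a b k 1 (-1)))^2 -
      4 * (4 * g1 a b k 1 (-1) * g2 a b k 1 (-1)) < 0 ∧
    (∀ μ : ℂ, μ^2 - (2*((-1)*g1 a b k 1 (-1) + 1*g2 a b k 1 (-1)) : ℝ) * μ +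
        ((4 * g1 a b k 1 (-1) * g2 a b k 1 (-1) : ℝ)) = 0 → μ.im ≠ 0) := by
  subst ha hb hk
  have hg1 : g1 (-11/10) (3/10) 1 1 (-1) = -21/10 + (3/10) * Real.tanh (-(1/10) : ℝ) := by
    unfold g1; norm_num
  have hg2 : g2 (-11/10) (3/10) 1 1 (-1) = -1/10 + (3/10) * Real.tanh (-(21/10) : ℝ) := by
    unfold g2; norm_num
  obtain ⟨h1a, h1b⟩ := t1_bounds
  obtain ⟨h2a, h2b⟩ := t2_bounds
  set T1 := Real.tanh (-(1/10) : ℝ)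
  set T2 := Real.tanh (-(21/10) : ℝ)
  rw [hg1, hg2]
  have hdetpos : 4 * (-21/10 + (3/10) * T1) * (-1/10 + (3/10) * T2) > 0 := by nlinarith
  have hdisc : (2*((-1)*(-21/10 + (3/10) * T1) + 1*(-1/10 + (3/10) * T2)))^2 -
      4 * (4 * (-21/10 + (3/10) * T1) * (-1/10 + (3/10) * T2)) < 0 := by nlinarith
  refine ⟨?_, hdetpos, hdisc, ?_⟩
  · rw [Matrix.det_fin_two_of]; ring
  · intro μ hμ him
    set T : ℝ := 2*((-1)*(-21/10 + (3/10) * T1) + 1*(-1/10 + (3/10) * T2)) with hT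
    set D : ℝ := 4 * (-21/10 + (3/10) * T1) * (-1/10 + (3/10) * T2) with hD
    have hμr : μ = (μ.re : ℂ) := by
      apply Complex.ext <;> simp [him]
    rw [hμr] at hμ
    have hr : (μ.re)^2 - T * μ.re + D = 0 := by
      have : (((μ.re)^2 - T * μ.re + D : ℝ) : ℂ) = 0 := by push_cast; linear_combination hμ
      exact_mod_cast this
    nlinarith [sq_nonneg (2*μ.re - T)]
end
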